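/- Let F be a free group of finite rank n and H ≤ F a subgroup such that the induced map on abelianizations H/[H,H] → F/[F,F] is injective. Then H is finitely generated; in fact H is a free group of rank at most n. -/
import Mathlib

/-- A free group on a finite type is finitely generated. -/
lemma freeGroup_fg_aux (m : ℕ) : Group.FG (FreeGroup (Fin m)) := by
  rw [Group.fg_iff]
  exact ⟨Set.range FreeGroup.of, FreeGroup.closure_range_of _, Set.finite_range _⟩

/-- An `H₁`-injective subgroup of a free group of rank `n` is finitely generated;
in fact it is free of rank at most `n`. Here `H₁`-injectivity means injectivity of the
induced map on abelianizations. -/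
theorem h1_injective_subgroup_of_free_is_fg (n : ℕ)
    (H : Subgroup (FreeGroup (Fin n)))
    (h : Function.Injective (Abelianization.map H.subtype)) :
    Group.FG H ∧ ∃ m : ℕ, m ≤ n ∧ Nonempty (H ≃* FreeGroup (Fin m)) := by
  -- By Nielsen–Schreier, `H` is free on the set `S`.
  set S := IsFreeGroup.Generators H with hS
  let e : H ≃* FreeGroup S := IsFreeGroup.toFreeGroup H
  -- The induced injective map on abelianizations
  let f : Abelianization (FreeGroup S) →* Abelianization (FreeGroup (Fin n)) :=
    (Abelianization.map H.subtype).comp e.symm.abelianizationCongr.toMonoidHom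
  have hf : Function.Injective f :=
    h.comp e.symm.abelianizationCongr.injective
  -- Turn it into an injective `ℤ`-linear map `(S →₀ ℤ) →ₗ[ℤ] (Fin n →₀ ℤ)`.
  let g : (S →₀ ℤ) →+ (Fin n →₀ ℤ) :=
    ((FreeAbelianGroup.equivFinsupp (Fin n)).toAddMonoidHom.comp
      (MonoidHom.toAdditive f)).comp
      (FreeAbelianGroup.equivFinsupp S).symm.toAddMonoidHom
  have hg : Function.Injective g := by
    refine (FreeAbelianGroup.equivFinsupp (Fin n)).injective.comp ?_
    exact hf.comp (FreeAbelianGroup.equivFinsupp S).symm.injective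
  have hrank : Module.rank ℤ (S →₀ ℤ) ≤ Module.rank ℤ (Fin n →₀ ℤ) :=
    LinearMap.rank_le_of_injective g.toIntLinearMap hg
  rw [rank_finsupp_self', rank_finsupp_self'] at hrank
  have hcard : (Cardinal.mk S) ≤ n := by
    simpa using hrank
  have hfin : Finite S := by
    have : Cardinal.mk S < Cardinal.aleph0 :=
      lt_of_le_of_lt hcard (Cardinal.nat_lt_aleph0 n)
    exact Cardinal.lt_aleph0_iff_finite.mp this
  have : Fintype S := Fintype.ofFinite S
  refine ⟨?_, Fintype.card S, ?_, ⟨e.trans (FreeGroup.freeGroupCongr (Fintype.equivFin S))⟩⟩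
  · have : Group.FG (FreeGroup (Fin (Fintype.card S))) := freeGroup_fg_aux _
    exact Group.fg_of_surjective
      (f := (e.trans (FreeGroup.freeGroupCongr (Fintype.equivFin S))).symm.toMonoidHom)
      (e.trans (FreeGroup.freeGroupCongr (Fintype.equivFin S))).symm.surjective
  · have := Cardinal.mk_fintype S
    rwa [this, Nat.cast_le] at hcard
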